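/- arXiv:2211.10505 — 4 statements merged into one kernel-verified Lean document; each statement's English description precedes it below -/
import Mathlib

section
/- Let G be a group of orientation-preserving homeomorphisms of ℝ such that every element of G other than the identity has exactly one fixed point. Then G is abelian. -/
/-!
Order `G` by comparing its elements near `+∞`: `a < b` when `a x < b x` for all large `x`.
Since `b⁻¹ * a` has a single fixed point, the intermediate value theorem makes this a total
order, and it is invariant under multiplication on both sides. It is Archimedean: if `1 < u`
then `u` pushes every point beyond its fixed point `p` off to `+∞`. Either `u` lies above the
identity, and then `p` is fixed by all of `G`, or `u` also pushes points below `p` off to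
`-∞`; in both cases some `v⁻¹ * u ^ n` moves a point down and a larger point up, and having a
single fixed point it moves every large point up, i.e. `v < u ^ n`. Hölder's theorem, that a
bi-ordered Archimedean group is abelian, concludes.
-/

/-- The group of self-homeomorphisms of a topological space,
with `(f * g) x = f (g x)`. -/
instance homeomorphSelfGroup {X : Type*} [TopologicalSpace X] : Group (X ≃ₜ X) where
  mul f g := g.trans f
  one := Homeomorph.refl X
  inv := Homeomorph.symm
  mul_assoc _ _ _ := rfl
  one_mul _ := rfl
  mul_one _ := rfl
  inv_mul_cancel f := Homeomorph.ext fun x => f.symm_apply_apply x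

open Filter Function Set

section Holder

variable {H : Type*} [Group H] [LinearOrder H] [MulLeftMono H] [MulRightMono H]

theorem exists_zpow_le_and_lt_zpow_add_one {ε : H} (hε : 1 < ε)
    (harch : ∀ b : H, ∃ n : ℕ, b < ε ^ n) (a : H) : ∃ m : ℤ, ε ^ m ≤ a ∧ a < ε ^ (m + 1) := by
  have hmono : StrictMono (ε ^ · : ℤ → H) := strictMono_int_of_lt_succ fun n => by
    simpa only [zpow_add_one] using lt_mul_of_one_lt_right' (ε ^ n) hε
  obtain ⟨N, hN⟩ := harch a
  obtain ⟨M, hM⟩ := harch a⁻¹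
  obtain ⟨m, hm, hmax⟩ := Int.exists_greatest_of_bdd (P := fun k => ε ^ k ≤ a)
    ⟨N, fun k hk => (hmono.lt_iff_lt.1 (hk.trans_lt (by simpa using hN))).le⟩
    ⟨-M, by simpa using (inv_lt'.1 hM).le⟩
  exact ⟨m, hm, lt_of_not_ge fun h => by linarith [hmax _ h]⟩

theorem exists_eq_zpow_of_forall_one_lt_le {c : H} (hc : 1 < c) (hmin : ∀ x : H, 1 < x → c ≤ x)
    (harch : ∀ b : H, ∃ n : ℕ, b < c ^ n) (a : H) : ∃ m : ℤ, a = c ^ m := by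
  obtain ⟨m, hle, hlt⟩ := exists_zpow_le_and_lt_zpow_add_one hc harch a
  refine ⟨m, by_contra fun hne => ?_⟩
  have h₁ : 1 < (c ^ m)⁻¹ * a := lt_inv_mul_iff_mul_lt.2 (by simpa using hle.lt_of_ne' hne)
  have h₂ : (c ^ m)⁻¹ * a < c := inv_mul_lt_iff_lt_mul.2 (by rwa [← zpow_add_one])
  exact (hmin _ h₁).not_gt h₂

theorem exists_one_lt_mul_self_le {δ c : H} (hδ : 1 < δ) (hδc : δ < c) :
    ∃ ε, 1 < ε ∧ ε * ε ≤ c := by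
  by_cases hsq : δ * δ ≤ c
  · exact ⟨δ, hδ, hsq⟩
  push Not at hsq
  refine ⟨δ⁻¹ * c, lt_inv_mul_iff_mul_lt.2 (by simpa using hδc), ?_⟩
  have h : δ⁻¹ * c * δ⁻¹ < 1 := by
    rwa [mul_inv_lt_iff_lt_mul, one_mul, inv_mul_lt_iff_lt_mul]
  calc δ⁻¹ * c * (δ⁻¹ * c) = δ⁻¹ * c * δ⁻¹ * c := by group
    _ ≤ c := mul_le_of_le_one_left' h.le

theorem commute_of_archimedean (harch : ∀ a b : H, 1 < a → ∃ n : ℕ, b < a ^ n) (a b : H) :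
    Commute a b := by
  suffices key : ∀ a b : H, a * b ≤ b * a from (key a b).antisymm (key b a)
  intro a b
  by_contra! hlt
  let c := (b * a)⁻¹ * (a * b)
  have hc : 1 < c := lt_inv_mul_iff_mul_lt.2 (by simpa using hlt)
  by_cases hδ : ∃ δ, 1 < δ ∧ δ < c
  · obtain ⟨δ, hδ, hδc⟩ := hδ
    obtain ⟨ε, hε, hεc⟩ := exists_one_lt_mul_self_le hδ hδc
    obtain ⟨m, ham, ham'⟩ := exists_zpow_le_and_lt_zpow_add_one hε (harch ε · hε) a
    obtain ⟨n, hbn, hbn'⟩ := exists_zpow_le_and_lt_zpow_add_one hε (harch ε · hε) b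
    -- trapping `a` and `b` between consecutive powers of `ε` traps `c` below `ε * ε`
    have hba : ε ^ (n + m) ≤ b * a := by
      rw [zpow_add]; exact mul_le_mul' hbn ham
    have hab : a * b < ε ^ (n + m + 2) := by
      calc a * b < ε ^ (m + 1) * ε ^ (n + 1) := mul_lt_mul_of_lt_of_lt ham' hbn'
        _ = ε ^ (n + m + 2) := by rw [← zpow_add]; ring_nf
    have : c < ε * ε :=
      calc c < (ε ^ (n + m))⁻¹ * ε ^ (n + m + 2) :=
            mul_lt_mul_of_le_of_lt (inv_le_inv_iff.2 hba) hab
        _ = ε * ε := by rw [← zpow_neg, ← zpow_add, neg_add_cancel_left, zpow_two]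
    exact (hεc.trans_lt this).false
  · push Not at hδ
    obtain ⟨m, ha⟩ := exists_eq_zpow_of_forall_one_lt_le hc hδ (harch c · hc) a
    obtain ⟨n, hb⟩ := exists_eq_zpow_of_forall_one_lt_le hc hδ (harch c · hc) b
    exact hlt.ne (by rw [ha, hb, ← zpow_add, ← zpow_add, add_comm])

end Holder

theorem IsPreconnected.forall_lt_or_forall_gt_of_forall_ne {X α : Type*} [TopologicalSpace X]
    [LinearOrder α] [TopologicalSpace α] [OrderClosedTopology α] {s : Set X} (hs : IsPreconnected s)
    {f g : X → α} (hf : ContinuousOn f s) (hg : ContinuousOn g s) (hne : ∀ x ∈ s, f x ≠ g x) :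
    (∀ x ∈ s, f x < g x) ∨ ∀ x ∈ s, g x < f x := by
  by_contra! h
  obtain ⟨⟨a, ha, hga⟩, ⟨b, hb, hfb⟩⟩ := h
  obtain ⟨x, hx, hfx⟩ := hs.intermediate_value₂ hb ha hf hg hfb hga
  exact hne x hx hfx

section Line

variable {α : Type*} [ConditionallyCompleteLinearOrder α] [TopologicalSpace α] [OrderTopology α]
  {f : α → α}

theorem tendsto_iterate_atTop_of_forall_lt_apply (hf : Continuous f) {p : α}
    (hp : ∀ x, p < x → x < f x) {y : α} (hy : p < y) :
    Tendsto (fun n => f^[n] y) atTop atTop := by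
  have hgt : ∀ n, p < f^[n] y := fun n => by
    induction n with
    | zero => exact hy
    | succ n ih => rw [iterate_succ_apply']; exact ih.trans (hp _ ih)
  have hmono : Monotone (fun n => f^[n] y) := monotone_nat_of_le_succ fun n => by
    rw [iterate_succ_apply']; exact (hp _ (hgt n)).le
  refine tendsto_atTop_atTop_of_monotone' hmono fun hbdd => ?_
  have hfix := isFixedPt_of_tendsto_iterate (tendsto_atTop_ciSup hmono hbdd) hf.continuousAt
  exact (hp _ (hy.trans_le (le_ciSup hbdd 0))).ne' hfix

theorem tendsto_iterate_atBot_of_forall_apply_lt (hf : Continuous f) {p : α}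
    (hp : ∀ x, x < p → f x < x) {y : α} (hy : y < p) :
    Tendsto (fun n => f^[n] y) atTop atBot :=
  tendsto_iterate_atTop_of_forall_lt_apply (α := αᵒᵈ) hf hp hy

variable [DenselyOrdered α]

theorem forall_lt_apply_of_apply_le_of_lt_apply (hf : Continuous f)
    (hfix : {x | f x = x}.Subsingleton) {a b : α} (hab : a < b) (ha : f a ≤ a) (hb : b < f b) :
    ∀ x, b ≤ x → x < f x := by
  intro x hbx
  by_contra! hx
  obtain ⟨q, hq, hfq⟩ := isPreconnected_Icc.intermediate_value₂ (left_mem_Icc.2 hab.le)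
    (right_mem_Icc.2 hab.le) hf.continuousOn continuousOn_id ha hb.le
  obtain ⟨r, hr, hfr⟩ := isPreconnected_Icc.intermediate_value₂ (left_mem_Icc.2 hbx)
    (right_mem_Icc.2 hbx) continuousOn_id hf.continuousOn hb.le hx
  have hqr : q = r := hfix hfq hfr.symm
  have hqb : q = b := le_antisymm hq.2 (hqr ▸ hr.1)
  exact hb.ne' (hqb ▸ hfq)

end Line

theorem Homeomorph.coe_pow {X : Type*} [TopologicalSpace X] (f : X ≃ₜ X) (n : ℕ) :
    ⇑(f ^ n) = (⇑f)^[n] := by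
  induction n with
  | zero => rfl
  | succ n ih => rw [pow_succ', iterate_succ', ← ih]; rfl

theorem lt_inv_mul_apply_iff {X : Type*} [TopologicalSpace X] [LinearOrder X] {v : X ≃ₜ X}
    (hv : StrictMono v) (w : X ≃ₜ X) {x : X} : x < (v⁻¹ * w) x ↔ v x < w x := by
  rw [← hv.lt_iff_lt]
  simp

section UniqueFixedPoint

variable {G : Subgroup (ℝ ≃ₜ ℝ)}

theorem eventually_lt_or_eventually_gt (hfix : ∀ g ∈ G, g ≠ 1 → ∃! x : ℝ, g x = x) {a b : G}
    (hab : a ≠ b) : (∀ᶠ x in atTop, a.1 x < b.1 x) ∨ ∀ᶠ x in atTop, b.1 x < a.1 x := by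
  obtain ⟨q, -, hq⟩ := hfix _ (b⁻¹ * a).2 (by exact_mod_cast fun h => hab (inv_mul_eq_one.1 h).symm)
  have hne : ∀ x ∈ Ioi q, a.1 x ≠ b.1 x := fun x hx h => hx.ne' (hq x (by simp [h]))
  exact (isPreconnected_Ioi.forall_lt_or_forall_gt_of_forall_ne a.1.continuous.continuousOn
    b.1.continuous.continuousOn hne).imp (eventually_gt_atTop q).mono (eventually_gt_atTop q).mono

theorem apply_eq_of_forall_le_apply (hmono : ∀ g ∈ G, StrictMono (g : ℝ → ℝ))
    (hfix : ∀ g ∈ G, g ≠ 1 → ∃! x : ℝ, g x = x) {u : G} (hu : u ≠ 1) (hle : ∀ x, x ≤ u.1 x)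
    {p : ℝ} (hp : u.1 p = p) (k : G) : k.1 p = p := by
  have hfixu := hfix _ u.2 (by exact_mod_cast hu)
  by_contra hkp
  have hconj : ∀ x, x ≤ (k * u * k⁻¹).1 x := fun x => by
    simpa using (hmono _ k.2).monotone (hle (k⁻¹.1 x))
  have hmoved : (u * (k * u * k⁻¹)).1 (k.1 p) ≠ k.1 p := by
    simpa [hp] using fun h => hkp (hfixu.unique h hp)
  obtain ⟨x, hx, -⟩ := hfix _ (u * (k * u * k⁻¹)).2 fun h => hmoved (by simp [h])
  have hcx : (k * u * k⁻¹).1 x = x :=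
    le_antisymm (le_trans (hle _) (le_of_eq hx)) (hconj x)
  have hux : u.1 x = x := calc
    u.1 x = u.1 ((k * u * k⁻¹).1 x) := by rw [hcx]
    _ = x := hx
  have hukx : u.1 (k⁻¹.1 x) = k⁻¹.1 x := by
    apply (hmono _ k.2).injective
    simpa using hcx
  apply hkp
  calc k.1 p = k.1 (k⁻¹.1 x) := by rw [hfixu.unique hukx hp]
    _ = x := by simp
    _ = p := hfixu.unique hux hp

theorem eventually_lt_of_le_of_lt (hmono : ∀ g ∈ G, StrictMono (g : ℝ → ℝ))
    (hfix : ∀ g ∈ G, g ≠ 1 → ∃! x : ℝ, g x = x) {v w : G} {a b : ℝ} (hab : a < b)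
    (ha : w.1 a ≤ v.1 a) (hb : v.1 b < w.1 b) : ∀ᶠ x in atTop, v.1 x < w.1 x := by
  have hiff (x : ℝ) : x < (v⁻¹ * w).1 x ↔ v.1 x < w.1 x := lt_inv_mul_apply_iff (hmono _ v.2) w.1
  have hz : v⁻¹ * w ≠ 1 := fun h => ((hiff b).2 hb).ne' (by simp [h])
  have hz' := forall_lt_apply_of_apply_le_of_lt_apply (v⁻¹ * w).1.continuous
    (fun x hx y hy => (hfix _ (v⁻¹ * w).2 (by exact_mod_cast hz)).unique hx hy) hab
    (not_lt.1 fun h => ha.not_gt ((hiff a).1 h)) ((hiff b).2 hb)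
  exact (eventually_ge_atTop b).mono fun x hx => (hiff x).1 (hz' x hx)

theorem exists_pow_eventually_lt (hmono : ∀ g ∈ G, StrictMono (g : ℝ → ℝ))
    (hfix : ∀ g ∈ G, g ≠ 1 → ∃! x : ℝ, g x = x) {u : G} (hu : ∀ᶠ x in atTop, x < u.1 x) (v : G) :
    ∃ n : ℕ, ∀ᶠ x in atTop, v.1 x < (u ^ n).1 x := by
  have hu1 : u ≠ 1 := by
    rintro rfl
    obtain ⟨x, hx⟩ := hu.exists
    exact lt_irrefl x hx
  obtain ⟨p, hp, hpu⟩ := hfix _ u.2 (by exact_mod_cast hu1)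
  have hne : ∀ x, x ≠ p → x ≠ u.1 x := fun x hxp h => hxp (hpu x h.symm)
  have habove : ∀ x, p < x → x < u.1 x := by
    refine (isPreconnected_Ioi.forall_lt_or_forall_gt_of_forall_ne continuousOn_id
      u.1.continuous.continuousOn fun x hx => hne x hx.ne').resolve_right fun h => ?_
    obtain ⟨x, hx, hpx⟩ := (hu.and (eventually_gt_atTop p)).exists
    exact (h x hpx).not_gt hx
  suffices ∃ n : ℕ, ∃ a b, a < b ∧ (u ^ n).1 a ≤ v.1 a ∧ v.1 b < (u ^ n).1 b by
    obtain ⟨n, a, b, hab, ha, hb⟩ := this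
    exact ⟨n, eventually_lt_of_le_of_lt hmono hfix hab ha hb⟩
  have hiter (n : ℕ) : (u ^ n).1 = u.1^[n] := by rw [Subgroup.coe_pow, Homeomorph.coe_pow]
  have hescape := tendsto_iterate_atTop_of_forall_lt_apply u.1.continuous habove (lt_add_one p)
  rcases isPreconnected_Iio.forall_lt_or_forall_gt_of_forall_ne continuousOn_id
    u.1.continuous.continuousOn (fun x hx => hne x hx.ne) with hbelow | hbelow
  · have hle (x : ℝ) : x ≤ u.1 x := by
      rcases lt_trichotomy x p with h | rfl | h
      exacts [(hbelow x h).le, hp.ge, (habove x h).le]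
    have hvp : v.1 p = p := apply_eq_of_forall_le_apply hmono hfix hu1 hle hp v
    obtain ⟨n, hn⟩ := (hescape.eventually_gt_atTop (v.1 (p + 1))).exists
    exact ⟨n, p, p + 1, lt_add_one p, by rw [hiter, iterate_fixed hp, hvp], by rwa [hiter]⟩
  · have hescape' :=
      tendsto_iterate_atBot_of_forall_apply_lt u.1.continuous hbelow (sub_one_lt p)
    obtain ⟨n, hn₁, hn₂⟩ := ((hescape.eventually_gt_atTop (v.1 (p + 1))).and
      (hescape'.eventually_lt_atBot (v.1 (p - 1)))).exists
    exact ⟨n, p - 1, p + 1, by linarith, by rw [hiter]; exact hn₂.le, by rwa [hiter]⟩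

noncomputable abbrev germOrder (hfix : ∀ g ∈ G, g ≠ 1 → ∃! x : ℝ, g x = x) : LinearOrder G :=
  let r : G → G → Prop := fun a b => ∀ᶠ x in atTop, a.1 x < b.1 x
  letI : IsStrictTotalOrder G r :=
    { trichotomous := fun _ _ hab hba =>
        by_contra fun h => (eventually_lt_or_eventually_gt hfix h).elim hab hba
      irrefl := fun _ h => h.exists.elim fun _ hx => lt_irrefl _ hx
      trans := fun _ _ _ hab hbc => (hab.and hbc).mono fun _ h => h.1.trans h.2 }
  letI : DecidableRel r := Classical.decRel r
  linearOrderOfSTO r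

end UniqueFixedPoint

/-- A group of orientation-preserving homeomorphisms of `ℝ` in which every nontrivial
element has exactly one fixed point is abelian. -/
theorem solodov_abelian
    (G : Subgroup (ℝ ≃ₜ ℝ))
    (hmono : ∀ g ∈ G, StrictMono (g : ℝ → ℝ))
    (hfix : ∀ g ∈ G, g ≠ 1 → ∃! x : ℝ, g x = x) :
    ∀ g ∈ G, ∀ h ∈ G, g * h = h * g := by
  let := germOrder hfix
  have hlt (a b : G) : a < b ↔ ∀ᶠ x in atTop, a.1 x < b.1 x := Iff.rfl
  have htendsto (a : G) : Tendsto a.1 atTop atTop :=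
    (hmono _ a.2).monotone.tendsto_atTop_atTop fun y => ⟨a.1.symm y, (a.1.apply_symm_apply y).ge⟩
  have : MulLeftStrictMono G :=
    ⟨fun a b c h => (hlt _ _).2 (((hlt b c).1 h).mono fun _ hx => hmono _ a.2 hx)⟩
  have : MulRightStrictMono G :=
    ⟨fun a b c h => (hlt _ _).2 ((htendsto a).eventually ((hlt b c).1 h))⟩
  have := mulLeftMono_of_mulLeftStrictMono G
  have := mulRightMono_of_mulRightStrictMono G
  have harch (u v : G) (hu : 1 < u) : ∃ n : ℕ, v < u ^ n := by
    simpa only [hlt] using exists_pow_eventually_lt hmono hfix ((hlt 1 u).1 hu) v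
  intro g hg h hh
  exact congrArg Subtype.val (commute_of_archimedean harch ⟨g, hg⟩ ⟨h, hh⟩).eq
end

section
/- Let λ be a nonzero irrational real number. If H : ℝ² → ℝ² is continuous and satisfies H ∘ τ₁ = τ₁ ∘ H, H ∘ τ₂ = τ₂ ∘ H and H ∘ f_λ = f_λ ∘ H, then H is the identity map of ℝ². -/
/-!
The displacement `H - id` is continuous and `ℤ²`-periodic, hence bounded. Its first coordinate
is multiplied by `λ` and its second by `λ⁻¹` under `f_λ`; since `|λ| ≠ 1`, iterating `f_λ` or
its inverse would make a nonzero value grow without bound, so both coordinates vanish.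
-/

open Set Bornology

theorem Irrational.abs_ne_one {x : ℝ} (hx : Irrational x) : |x| ≠ 1 := by
  intro h
  rcases (abs_eq zero_le_one).mp h with h | h
  · exact hx.ne_one h
  · exact hx.ne_int (-1) (by simpa using h)

theorem isCompact_range_of_periodic {α : Type*} [TopologicalSpace α] {g : ℝ × ℝ → α}
    (hg : Continuous g) (h₁ : ∀ p : ℝ × ℝ, g (p.1 + 1, p.2) = g p)
    (h₂ : ∀ p : ℝ × ℝ, g (p.1, p.2 + 1) = g p) : IsCompact (range g) := by
  suffices range g = g '' (Icc 0 1 ×ˢ Icc 0 1) by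
    rw [this]
    exact (isCompact_Icc.prod isCompact_Icc).image hg
  refine (image_subset_range _ _).antisymm' ?_
  rintro _ ⟨⟨x, y⟩, rfl⟩
  refine ⟨(Int.fract x, Int.fract y),
    ⟨⟨Int.fract_nonneg x, (Int.fract_lt_one x).le⟩, Int.fract_nonneg y, (Int.fract_lt_one y).le⟩,
    ?_⟩
  have per₁ : Function.Periodic (fun x => g (x, Int.fract y)) 1 := fun x => h₁ (x, _)
  have per₂ : Function.Periodic (fun y => g (x, y)) 1 := fun y => h₂ (x, y)
  calc g (Int.fract x, Int.fract y) = g (x, Int.fract y) := by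
        simpa [Int.self_sub_floor] using per₁.sub_int_mul_eq (x := x) ⌊x⌋
    _ = g (x, y) := by simpa [Int.self_sub_floor] using per₂.sub_int_mul_eq (x := y) ⌊y⌋

section Expansion

variable {α : Type*} {g : α → ℝ} {μ : ℝ}

theorem eq_zero_of_isBounded_of_apply_eq_mul {S : α → α} (hμ : 1 < |μ|)
    (hg : IsBounded (range g)) (h : ∀ p, g (S p) = μ * g p) : g = 0 := by
  obtain ⟨C, hC⟩ := isBounded_iff_forall_norm_le.mp hg
  funext p
  by_contra! hp : g p ≠ 0
  have iterate_eq : ∀ n : ℕ, g (S^[n] p) = μ ^ n * g p := by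
    intro n
    induction n with
    | zero => simp
    | succ n ih => rw [Function.iterate_succ_apply', h, ih, pow_succ]; ring
  have hgp : 0 < |g p| := abs_pos.mpr hp
  obtain ⟨n, hn⟩ := pow_unbounded_of_one_lt (C / |g p|) hμ
  have hbound := hC _ (mem_range_self (S^[n] p))
  rw [Real.norm_eq_abs, iterate_eq, abs_mul, abs_pow] at hbound
  rw [div_lt_iff₀ hgp] at hn
  linarith

theorem eq_zero_of_isBounded_of_apply_equiv_eq_mul (S : α ≃ α) (hμ₀ : μ ≠ 0) (hμ : |μ| ≠ 1)
    (hg : IsBounded (range g)) (h : ∀ p, g (S p) = μ * g p) : g = 0 := by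
  rcases hμ.lt_or_gt with hlt | hgt
  · refine eq_zero_of_isBounded_of_apply_eq_mul (S := S.symm) (μ := μ⁻¹) ?_ hg fun p => ?_
    · rwa [abs_inv, one_lt_inv₀ (abs_pos.mpr hμ₀)]
    · rw [eq_inv_mul_iff_mul_eq₀ hμ₀, ← h, S.apply_symm_apply]
  · exact eq_zero_of_isBounded_of_apply_eq_mul hgt hg h

end Expansion

theorem eq_zero_of_periodic_of_apply_equiv_eq_mul {g : ℝ × ℝ → ℝ} {μ : ℝ}
    (S : ℝ × ℝ ≃ ℝ × ℝ) (hμ₀ : μ ≠ 0) (hμ : |μ| ≠ 1) (hg : Continuous g)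
    (h₁ : ∀ p : ℝ × ℝ, g (p.1 + 1, p.2) = g p) (h₂ : ∀ p : ℝ × ℝ, g (p.1, p.2 + 1) = g p)
    (h : ∀ p, g (S p) = μ * g p) : g = 0 :=
  eq_zero_of_isBounded_of_apply_equiv_eq_mul S hμ₀ hμ
    (isCompact_range_of_periodic hg h₁ h₂).isBounded h

theorem centralizer_of_affine_subgroup_trivial_general
    (l : ℝ) (hl : Irrational l)
    (H : ℝ × ℝ → ℝ × ℝ) (hc : Continuous H)
    (h₁ : H ∘ (fun p : ℝ × ℝ => (p.1 + 1, p.2)) = (fun p : ℝ × ℝ => (p.1 + 1, p.2)) ∘ H)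
    (h₂ : H ∘ (fun p : ℝ × ℝ => (p.1, p.2 + 1)) = (fun p : ℝ × ℝ => (p.1, p.2 + 1)) ∘ H)
    (h₃ : H ∘ (fun p : ℝ × ℝ => (l * p.1, l⁻¹ * p.2))
        = (fun p : ℝ × ℝ => (l * p.1, l⁻¹ * p.2)) ∘ H) :
    ∀ p : ℝ × ℝ, H p = p := by
  have hl₀ : l ≠ 0 := hl.ne_zero
  let f : ℝ × ℝ ≃ ℝ × ℝ :=
    (Equiv.mulLeft₀ l hl₀).prodCongr (Equiv.mulLeft₀ l⁻¹ (inv_ne_zero hl₀))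
  have hf : ∀ p, f p = (l * p.1, l⁻¹ * p.2) := fun _ => rfl
  have e₁ p := congrFun h₁ p
  have e₂ p := congrFun h₂ p
  have e₃ p := congrFun h₃ p
  simp only [Function.comp_apply] at e₁ e₂ e₃
  have hu := eq_zero_of_periodic_of_apply_equiv_eq_mul f hl₀ hl.abs_ne_one
    (g := fun p => (H p).1 - p.1) (by fun_prop)
    (fun p => by simp [e₁]) (fun p => by simp [e₂]) (fun p => by simp only [hf, e₃]; ring)
  have hv := eq_zero_of_periodic_of_apply_equiv_eq_mul f (inv_ne_zero hl₀)
    (by rw [abs_inv, inv_ne_one]; exact hl.abs_ne_one)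
    (g := fun p => (H p).2 - p.2) (by fun_prop)
    (fun p => by simp [e₁]) (fun p => by simp [e₂]) (fun p => by simp only [hf, e₃]; ring)
  intro p
  exact Prod.ext (sub_eq_zero.mp (congrFun hu p)) (sub_eq_zero.mp (congrFun hv p))

/-- A continuous map of `ℝ²` commuting with the translations `τ₁`, `τ₂` and with
`f_λ : (x,y) ↦ (λx, λ⁻¹y)` for `λ` nonzero irrational is the identity. -/
theorem centralizer_of_affine_subgroup_trivial
    (l : ℝ) (hl0 : l ≠ 0) (hl : Irrational l)
    (H : ℝ × ℝ → ℝ × ℝ) (hc : Continuous H)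
    (h₁ : H ∘ (fun p : ℝ × ℝ => (p.1 + 1, p.2)) = (fun p : ℝ × ℝ => (p.1 + 1, p.2)) ∘ H)
    (h₂ : H ∘ (fun p : ℝ × ℝ => (p.1, p.2 + 1)) = (fun p : ℝ × ℝ => (p.1, p.2 + 1)) ∘ H)
    (h₃ : H ∘ (fun p : ℝ × ℝ => (l * p.1, l⁻¹ * p.2))
        = (fun p : ℝ × ℝ => (l * p.1, l⁻¹ * p.2)) ∘ H) :
    ∀ p : ℝ × ℝ, H p = p :=
  centralizer_of_affine_subgroup_trivial_general l hl H hc h₁ h₂ h₃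
end

section
/- Let λ₁, λ₂ be real numbers that are algebraically independent over ℚ. Then the set of points of ℝ² fixed by at least one non-identity element of the subgroup of the homeomorphism group of ℝ² generated by τ₁, τ₂, f_{λ₁} and f_{λ₂} is dense in ℝ². -/
open Classical in
/-- For `λ ≠ 0`, the homeomorphism `f_λ : (x,y) ↦ (λx, λ⁻¹y)` of `ℝ²`
(and the identity for the junk value `λ = 0`). -/
noncomputable def fHomeo (l : ℝ) : (ℝ × ℝ) ≃ₜ (ℝ × ℝ) :=
  if h : l ≠ 0 then
    (Homeomorph.mulLeft₀ l h).prodCongr (Homeomorph.mulLeft₀ l⁻¹ (inv_ne_zero h))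
  else Homeomorph.refl _

/-- The translation `τ₁ : (x,y) ↦ (x+1, y)` of `ℝ²`. -/
noncomputable def tau₁ : (ℝ × ℝ) ≃ₜ (ℝ × ℝ) := Homeomorph.addLeft ((1 : ℝ), (0 : ℝ))

/-- The translation `τ₂ : (x,y) ↦ (x, y+1)` of `ℝ²`. -/
noncomputable def tau₂ : (ℝ × ℝ) ≃ₜ (ℝ × ℝ) := Homeomorph.addLeft ((0 : ℝ), (1 : ℝ))

/-!
Conjugating `τ₁` and `τ₂` by `f_λ` gives the translations by `(λ, 0)` and `(0, λ)`, so the group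
contains every translation by a vector of `S × S`, where `S = ℤλ + ℤ`. Composing such a
translation by `(a, b)` with `f_λ` gives an affine map with linear part `λ ≠ 1`; it is not the
identity and fixes `(a / (1 - λ), b / (1 - λ⁻¹))`. Since `λ = λ₁` is transcendental, hence
irrational, `S` is dense in `ℝ`, and these fixed points form the image of the dense set `S × S`
under a linear homeomorphism.
-/

namespace Homeomorph

variable {X : Type*} [TopologicalSpace X] [AddGroup X] [SeparatelyContinuousAdd X]

theorem addLeft_zero : Homeomorph.addLeft (0 : X) = 1 :=
  ext fun _ => zero_add _

theorem addLeft_add (v w : X) :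
    Homeomorph.addLeft (v + w) = Homeomorph.addLeft v * Homeomorph.addLeft w :=
  ext fun x => add_assoc v w x

theorem addLeft_neg (v : X) : Homeomorph.addLeft (-v) = (Homeomorph.addLeft v)⁻¹ :=
  (addLeft_symm v).symm

end Homeomorph

namespace Subgroup

variable {X : Type*} [TopologicalSpace X] [AddGroup X] [SeparatelyContinuousAdd X]

def translations (G : Subgroup (X ≃ₜ X)) : AddSubgroup X where
  carrier := {v | Homeomorph.addLeft v ∈ G}
  zero_mem' := by simp [Homeomorph.addLeft_zero]
  add_mem' hv hw := by simpa [Homeomorph.addLeft_add] using G.mul_mem hv hw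
  neg_mem' hv := by simpa [Homeomorph.addLeft_neg] using G.inv_mem hv

theorem mem_translations {G : Subgroup (X ≃ₜ X)} {v : X} :
    v ∈ G.translations ↔ Homeomorph.addLeft v ∈ G :=
  Iff.rfl

end Subgroup

section AffineExample

variable {l : ℝ}

theorem fHomeo_apply (hl : l ≠ 0) (p : ℝ × ℝ) : fHomeo l p = (l * p.1, l⁻¹ * p.2) := by
  rw [fHomeo, dif_pos hl]
  rfl

theorem fHomeo_mul_tau₁_mul_inv (hl : l ≠ 0) :
    fHomeo l * tau₁ * (fHomeo l)⁻¹ = Homeomorph.addLeft (l, 0) := by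
  refine mul_inv_eq_of_eq_mul (Homeomorph.ext fun p => ?_)
  simp [tau₁, fHomeo_apply hl, mul_add]

theorem inv_fHomeo_mul_tau₂_mul (hl : l ≠ 0) :
    (fHomeo l)⁻¹ * tau₂ * fHomeo l = Homeomorph.addLeft (0, l) := by
  rw [mul_assoc]
  refine inv_mul_eq_of_eq_mul (Homeomorph.ext fun p => ?_)
  simp [tau₂, fHomeo_apply hl, mul_add, hl]

theorem prod_closure_le_translations {G : Subgroup ((ℝ × ℝ) ≃ₜ (ℝ × ℝ))} (hl : l ≠ 0)
    (h₁ : tau₁ ∈ G) (h₂ : tau₂ ∈ G) (hf : fHomeo l ∈ G) :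
    (AddSubgroup.closure {l, 1}).prod (AddSubgroup.closure {l, 1}) ≤ G.translations := by
  have hl₁ : ((l, 0) : ℝ × ℝ) ∈ G.translations := by
    rw [Subgroup.mem_translations, ← fHomeo_mul_tau₁_mul_inv hl]
    exact G.mul_mem (G.mul_mem hf h₁) (G.inv_mem hf)
  have hl₂ : ((0, l) : ℝ × ℝ) ∈ G.translations := by
    rw [Subgroup.mem_translations, ← inv_fHomeo_mul_tau₂_mul hl]
    exact G.mul_mem (G.mul_mem (G.inv_mem hf) h₂) hf
  rw [AddSubgroup.prod_le_iff, AddSubgroup.map_le_iff_le_comap, AddSubgroup.map_le_iff_le_comap,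
    AddSubgroup.closure_le, AddSubgroup.closure_le]
  exact ⟨Set.pair_subset hl₁ h₁, Set.pair_subset hl₂ h₂⟩

theorem addLeft_mul_fHomeo_apply (hl : l ≠ 0) (v p : ℝ × ℝ) :
    (Homeomorph.addLeft v * fHomeo l) p = (v.1 + l * p.1, v.2 + l⁻¹ * p.2) := by
  simp only [Homeomorph.mul_apply, Homeomorph.coe_addLeft, fHomeo_apply hl]
  rfl

theorem addLeft_mul_fHomeo_ne_one (hl₀ : l ≠ 0) (hl₁ : l ≠ 1) (v : ℝ × ℝ) :
    Homeomorph.addLeft v * fHomeo l ≠ 1 := by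
  intro h
  have h₀ := congrArg (fun g => (g (0, 0)).1) h
  have h₁ := congrArg (fun g => (g (1, 0)).1) h
  simp only [addLeft_mul_fHomeo_apply hl₀, Homeomorph.one_apply] at h₀ h₁
  exact hl₁ (by linarith)

noncomputable def affineFixedPoint (l : ℝ) (v : ℝ × ℝ) : ℝ × ℝ :=
  (v.1 / (1 - l), v.2 / (1 - l⁻¹))

theorem addLeft_mul_fHomeo_apply_affineFixedPoint (hl₀ : l ≠ 0) (hl₁ : l ≠ 1) (v : ℝ × ℝ) :
    (Homeomorph.addLeft v * fHomeo l) (affineFixedPoint l v) = affineFixedPoint l v := by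
  have h₁ : 1 - l ≠ 0 := sub_ne_zero.2 hl₁.symm
  have h₂ : l - 1 ≠ 0 := sub_ne_zero.2 hl₁
  rw [addLeft_mul_fHomeo_apply hl₀, affineFixedPoint, Prod.mk.injEq]
  constructor <;> field_simp <;> ring

theorem Dense.image_affineFixedPoint (hl : l ≠ 1) {s : Set (ℝ × ℝ)} (hs : Dense s) :
    Dense (affineFixedPoint l '' s) := by
  let e := (Homeomorph.mulRight₀ (1 - l)⁻¹ (inv_ne_zero (sub_ne_zero.2 hl.symm))).prodCongr
    (Homeomorph.mulRight₀ (1 - l⁻¹)⁻¹ (inv_ne_zero (sub_ne_zero.2 (inv_ne_one.2 hl).symm)))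
  exact e.isDenseEmbedding.dense_image.2 hs

end AffineExample

/-- For `λ₁, λ₂` algebraically independent over `ℚ`, the set of points of `ℝ²` fixed
by some nontrivial element of the group generated by `τ₁, τ₂, f_{λ₁}, f_{λ₂}` is
dense in `ℝ²`. -/
theorem affine_example_dense_fixed_points
    (l₁ l₂ : ℝ) (hind : AlgebraicIndependent ℚ ![l₁, l₂]) :
    Dense {p : ℝ × ℝ | ∃ g ∈ (Subgroup.closure
        {tau₁, tau₂, fHomeo l₁, fHomeo l₂} : Subgroup ((ℝ × ℝ) ≃ₜ (ℝ × ℝ))),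
      g ≠ 1 ∧ g p = p} := by
  set G : Subgroup ((ℝ × ℝ) ≃ₜ (ℝ × ℝ)) := Subgroup.closure {tau₁, tau₂, fHomeo l₁, fHomeo l₂}
  have hirr : Irrational l₁ := by simpa using (hind.transcendental 0).irrational
  have hS : Dense (AddSubgroup.closure {l₁, 1} : Set ℝ) :=
    dense_addSubgroupClosure_pair_iff.2 (by simpa using hirr)
  have hf : fHomeo l₁ ∈ G := Subgroup.subset_closure (by simp)
  have hT := prod_closure_le_translations hirr.ne_zero (Subgroup.subset_closure (by simp))
    (Subgroup.subset_closure (by simp)) hf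
  refine ((hS.prod hS).image_affineFixedPoint hirr.ne_one).mono ?_
  rintro _ ⟨v, hv, rfl⟩
  exact ⟨_, G.mul_mem (hT hv) hf, addLeft_mul_fHomeo_ne_one hirr.ne_zero hirr.ne_one v,
    addLeft_mul_fHomeo_apply_affineFixedPoint hirr.ne_zero hirr.ne_one v⟩
end

section
/- Let G be a group of homeomorphisms of ℝ² in which every element has product form and which satisfies Axiom (A1). Fix c ∈ ℝ and let S = {g ∈ G : g maps the vertical line {c} × ℝ to itself}. Then the subgroup of S consisting of those g whose coordinate maps g₁ and g₂ are both strictly increasing is abelian. -/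
/-- A homeomorphism of `ℝ` is topologically contracting if all forward orbits
converge to a single point. -/
def TopContracting (f : ℝ ≃ₜ ℝ) : Prop :=
  ∃ p : ℝ, ∀ y : ℝ, Filter.Tendsto (fun n => (⇑f)^[n] y) Filter.atTop (nhds p)

/-- A homeomorphism of `ℝ` is topologically expanding if its inverse is
topologically contracting. -/
def TopExpanding (f : ℝ ≃ₜ ℝ) : Prop := TopContracting f.symm

/-- A homeomorphism of `ℝ²` has product form if it acts separately on the two
coordinates by homeomorphisms of `ℝ`. -/
def ProductForm (F : (ℝ × ℝ) ≃ₜ (ℝ × ℝ)) : Prop :=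
  ∃ f₁ f₂ : ℝ ≃ₜ ℝ, ∀ p : ℝ × ℝ, F p = (f₁ p.1, f₂ p.2)

/-- Axiom (A1) for a group of product-form homeomorphisms of the trivially
bifoliated plane `ℝ²`. -/
def AxiomA1 (G : Subgroup ((ℝ × ℝ) ≃ₜ (ℝ × ℝ))) : Prop :=
  ∀ g ∈ G, g ≠ 1 → ∀ f₁ f₂ : ℝ ≃ₜ ℝ, (∀ p : ℝ × ℝ, g p = (f₁ p.1, f₂ p.2)) →
    ((∃ x : ℝ, f₁ x = x) ∨ (∃ y : ℝ, f₂ y = y)) →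
    ((TopContracting f₁ ∧ TopExpanding f₂) ∨ (TopExpanding f₁ ∧ TopContracting f₂))

/-!
On the first coordinate, the elements in question are increasing homeomorphisms of `ℝ` fixing `c`.
By Axiom (A1) a nontrivial one is contracting or expanding, so `c` is its only fixed point: the
subgroup they form acts freely on `(c, ∞)`. Comparing the images of one point `x₀ > c` therefore
orders the group, and the order is bi-invariant because, by the intermediate value theorem, the
comparison does not depend on the chosen point. It is archimedean because an increasing continuous
map without fixed points pushes every orbit to infinity. Hölder's theorem finishes the proof.
-/

theorem zpow_right_strictMono' {α : Type*} [Group α] [Preorder α] [MulLeftStrictMono α] {a : α}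
    (ha : 1 < a) : StrictMono fun n : ℤ ↦ a ^ n :=
  strictMono_int_of_lt_succ fun n ↦ by
    rw [zpow_add_one]
    exact lt_mul_of_one_lt_right' _ ha

section Holder

variable {α : Type*} [Group α] [LinearOrder α] [MulLeftMono α] [MulRightMono α]

theorem exists_zpow_le_lt_zpow_add_one {a : α} (ha : 1 < a) (harch : ∀ b : α, ∃ n : ℕ, b ≤ a ^ n)
    (b : α) : ∃ m : ℤ, a ^ m ≤ b ∧ b < a ^ (m + 1) := by
  have hmono := zpow_right_strictMono' ha
  have hbdd : ∃ k : ℤ, ∀ m : ℤ, a ^ m ≤ b → m ≤ k := by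
    obtain ⟨n, hn⟩ := harch b
    exact ⟨n, fun m hm ↦ hmono.le_iff_le.1 (by simpa using hm.trans hn)⟩
  have hne : ∃ m : ℤ, a ^ m ≤ b := by
    obtain ⟨n, hn⟩ := harch b⁻¹
    exact ⟨-n, by simpa [zpow_neg] using inv_le'.2 hn⟩
  obtain ⟨m, hm, hmax⟩ := Int.exists_greatest_of_bdd hbdd hne
  exact ⟨m, hm, lt_of_not_ge fun h ↦ by linarith [hmax _ h]⟩

theorem exists_eq_zpow_of_isLeast {δ : α} (harch : ∀ b : α, ∃ n : ℕ, b ≤ δ ^ n)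
    (hδ : IsLeast {g : α | 1 < g} δ) (b : α) : ∃ m : ℤ, b = δ ^ m := by
  obtain ⟨m, hm, hm'⟩ := exists_zpow_le_lt_zpow_add_one hδ.1 harch b
  have hlt : (δ ^ m)⁻¹ * b < δ := by
    rw [inv_mul_lt_iff_lt_mul, ← zpow_add_one]
    exact hm'
  have hle : 1 ≤ (δ ^ m)⁻¹ * b := le_inv_mul_iff_le.2 hm
  refine ⟨m, (inv_mul_eq_one.1 (hle.eq_or_lt.resolve_right fun h ↦ ?_).symm).symm⟩
  exact (hδ.2 h).not_gt hlt

theorem exists_one_lt_sq_le (hdense : ∀ ε : α, 1 < ε → ∃ g, 1 < g ∧ g < ε) {ε : α} (hε : 1 < ε) :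
    ∃ δ : α, 1 < δ ∧ δ ^ 2 ≤ ε := by
  obtain ⟨g, hg, hgε⟩ := hdense ε hε
  refine ⟨min g (g⁻¹ * ε), lt_min hg (lt_inv_mul_iff_lt.2 hgε), ?_⟩
  calc min g (g⁻¹ * ε) ^ 2 ≤ g * (g⁻¹ * ε) := by
        rw [sq]; exact mul_le_mul' (min_le_left _ _) (min_le_right _ _)
    _ = ε := mul_inv_cancel_left g ε

-- `x` and `y` both lie within one step of a power of `δ`, so `x * y` exceeds `y * x` by
-- less than two steps.
theorem inv_mul_mul_comm_lt_sq {δ : α} (hδ : 1 < δ) (harch : ∀ b : α, ∃ n : ℕ, b ≤ δ ^ n)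
    (x y : α) : (y * x)⁻¹ * (x * y) < δ ^ 2 := by
  obtain ⟨m, hxm, hxm'⟩ := exists_zpow_le_lt_zpow_add_one hδ harch x
  obtain ⟨n, hyn, hyn'⟩ := exists_zpow_le_lt_zpow_add_one hδ harch y
  calc (y * x)⁻¹ * (x * y) < (δ ^ n * δ ^ m)⁻¹ * (δ ^ (m + 1) * δ ^ (n + 1)) :=
        mul_lt_mul_of_le_of_lt (inv_le_inv_iff.2 (mul_le_mul' hyn hxm))
          (Left.mul_lt_mul hxm' hyn')
    _ = δ ^ 2 := by group

/-- Hölder's theorem. -/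
theorem mul_comm_of_archimedean (harch : ∀ a b : α, 1 < a → ∃ n : ℕ, b ≤ a ^ n) (x y : α) :
    x * y = y * x := by
  by_cases hdisc : ∃ δ : α, IsLeast {g : α | 1 < g} δ
  · obtain ⟨δ, hδ⟩ := hdisc
    obtain ⟨m, rfl⟩ := exists_eq_zpow_of_isLeast (harch δ · hδ.1) hδ x
    obtain ⟨n, rfl⟩ := exists_eq_zpow_of_isLeast (harch δ · hδ.1) hδ y
    exact (Commute.zpow_zpow_self δ m n).eq
  · have hdense : ∀ ε : α, 1 < ε → ∃ g, 1 < g ∧ g < ε := fun ε hε ↦ by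
      simpa [IsLeast, lowerBounds, hε] using not_exists.1 hdisc ε
    have hnot : ∀ u v : α, ¬ v * u < u * v := fun u v h ↦ by
      obtain ⟨δ, hδ, hδε⟩ := exists_one_lt_sq_le hdense (lt_inv_mul_iff_lt.2 h)
      exact (inv_mul_mul_comm_lt_sq hδ (harch δ · hδ) u v).not_ge hδε
    exact le_antisymm (not_lt.1 (hnot x y)) (not_lt.1 (hnot y x))

end Holder

open Function

theorem IsPreconnected.exists_isFixedPt {X : Type*} [TopologicalSpace X] [LinearOrder X]
    [OrderClosedTopology X] {s : Set X} (hs : IsPreconnected s) {f : X → X}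
    (hf : ContinuousOn f s) {a b : X} (ha : a ∈ s) (hb : b ∈ s) (hfa : f a ≤ a) (hfb : b ≤ f b) :
    ∃ x ∈ s, IsFixedPt f x :=
  hs.intermediate_value₂ ha hb hf continuousOn_id hfa hfb

theorem exists_lt_iterate_of_forall_lt_apply {X : Type*} [ConditionallyCompleteLinearOrder X]
    [TopologicalSpace X] [OrderTopology X] {f : X → X} (hf : Continuous f) {x : X}
    (hx : ∀ y, x ≤ y → y < f y) (b : X) : ∃ n : ℕ, b < f^[n] x := by
  have hge : ∀ n, x ≤ f^[n] x := fun n ↦ by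
    induction n with
    | zero => exact le_rfl
    | succ n ih => rw [iterate_succ_apply']; exact ih.trans (hx _ ih).le
  have hmono : Monotone fun n ↦ f^[n] x := monotone_nat_of_le_succ fun n ↦ by
    rw [iterate_succ_apply']; exact (hx _ (hge n)).le
  by_contra! hbound
  have hbdd : BddAbove (Set.range fun n ↦ f^[n] x) := ⟨b, Set.forall_mem_range.2 hbound⟩
  have hfix : IsFixedPt f (⨆ n, f^[n] x) :=
    isFixedPt_of_tendsto_iterate (tendsto_atTop_ciSup hmono hbdd) hf.continuousAt
  exact (hx _ (le_ciSup hbdd 0)).ne hfix.symm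

theorem TopContracting.eq_of_isFixedPt {f : ℝ ≃ₜ ℝ} (hf : TopContracting f) {a b : ℝ}
    (ha : IsFixedPt f a) (hb : IsFixedPt f b) : a = b := by
  obtain ⟨p, hp⟩ := hf
  have hlim : ∀ {x}, IsFixedPt f x → x = p := fun {x} hx ↦
    tendsto_const_nhds_iff.1 ((hp x).congr fun n ↦ (hx.iterate n).eq)
  exact (hlim ha).trans (hlim hb).symm

theorem TopExpanding.eq_of_isFixedPt {f : ℝ ≃ₜ ℝ} (hf : TopExpanding f) {a b : ℝ}
    (ha : IsFixedPt f a) (hb : IsFixedPt f b) : a = b :=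
  TopContracting.eq_of_isFixedPt hf (f.symm_apply_eq.2 ha.symm) (f.symm_apply_eq.2 hb.symm)

namespace MulAction

def strictMonoStabilizer (Γ : Type*) {X : Type*} [Group Γ] [LinearOrder X] [MulAction Γ X]
    (c : X) : Subgroup Γ where
  carrier := {g | StrictMono (g • · : X → X) ∧ g • c = c}
  mul_mem' := fun {g h} ⟨hg, hgc⟩ ⟨hh, hhc⟩ ↦
    ⟨fun x y hxy ↦ by simpa only [mul_smul] using hg (hh hxy), by rw [mul_smul, hhc, hgc]⟩
  one_mem' := ⟨fun x y hxy ↦ by simpa only [one_smul] using hxy, one_smul Γ c⟩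
  inv_mem' := fun {g} ⟨hg, hgc⟩ ↦
    ⟨fun x y hxy ↦ hg.lt_iff_lt.1 (by simpa only [smul_inv_smul] using hxy),
      inv_smul_eq_iff.2 hgc.symm⟩

variable {Γ X : Type*} [Group Γ] [ConditionallyCompleteLinearOrder X] [DenselyOrdered X]
  [NoMaxOrder X] [TopologicalSpace X] [OrderTopology X] [MulAction Γ X]

theorem mul_comm_of_free_on_Ioi {c : X} (hmono : ∀ g : Γ, StrictMono (g • · : X → X))
    (hc : ∀ g : Γ, g • c = c) (hfree : ∀ g : Γ, ∀ x, c < x → g • x = x → g = 1) (g h : Γ) :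
    g * h = h * g := by
  have hcont : ∀ g : Γ, Continuous (g • · : X → X) := fun g ↦
    (hmono g).monotone.continuous_of_surjective (MulAction.surjective g)
  have heq_one : ∀ g : Γ, ∀ {x y}, c < x → c < y → g • x ≤ x → y ≤ g • y → g = 1 := by
    intro g x y hx hy hgx hgy
    obtain ⟨z, hz, hfix⟩ :=
      isPreconnected_Ioi.exists_isFixedPt (hcont g).continuousOn hx hy hgx hgy
    exact hfree g z hz hfix
  obtain ⟨x₀, hx₀⟩ := exists_gt c
  have hinj : Injective (· • x₀ : Γ → X) := fun g h hgh ↦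
    (inv_mul_eq_one.1 (hfree _ x₀ hx₀ (by simp only [mul_smul, hgh, inv_smul_smul]))).symm
  let _ : LinearOrder Γ := LinearOrder.lift' _ hinj
  have hcomp : ∀ {g h : Γ}, g < h → ∀ {y}, c < y → g • y < h • y := by
    intro g h hgh y hy
    by_contra! hle
    have hx : (h⁻¹ * g) • x₀ ≤ x₀ := by
      simpa only [mul_smul, inv_smul_smul] using (hmono h⁻¹).monotone hgh.le
    have hy' : y ≤ (h⁻¹ * g) • y := by
      simpa only [mul_smul, inv_smul_smul] using (hmono h⁻¹).monotone hle
    exact hgh.ne (inv_mul_eq_one.1 (heq_one _ hx₀ hy hx hy')).symm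
  have : MulLeftStrictMono Γ := ⟨fun a b b' (h : b • x₀ < b' • x₀) ↦
    show (a * b) • x₀ < (a * b') • x₀ by rw [mul_smul, mul_smul]; exact hmono a h⟩
  have : MulRightStrictMono Γ := ⟨fun a b b' h ↦
    show (b * a) • x₀ < (b' * a) • x₀ by
      rw [mul_smul, mul_smul]; exact hcomp h (hc a ▸ hmono a hx₀)⟩
  have := mulLeftMono_of_mulLeftStrictMono Γ
  have := mulRightMono_of_mulRightStrictMono Γ
  refine mul_comm_of_archimedean (fun a b ha ↦ ?_) g h
  have hax : (1 : Γ) • x₀ < a • x₀ := ha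
  rw [one_smul] at hax
  have hup : ∀ y, x₀ ≤ y → y < a • y := fun y hy ↦ lt_of_not_ge fun hay ↦
    ha.ne' (heq_one a (hx₀.trans_le hy) hx₀ hay hax.le)
  obtain ⟨n, hn⟩ := exists_lt_iterate_of_forall_lt_apply (hcont a) hup (b • x₀)
  rw [smul_iterate_apply] at hn
  exact ⟨n, hn.le⟩

end MulAction

def firstCoord (F : (ℝ × ℝ) ≃ₜ (ℝ × ℝ)) (x : ℝ) : ℝ := (F (x, 0)).1

theorem firstCoord_eq {F : (ℝ × ℝ) ≃ₜ (ℝ × ℝ)} {f₁ f₂ : ℝ ≃ₜ ℝ}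
    (hF : ∀ p : ℝ × ℝ, F p = (f₁ p.1, f₂ p.2)) : firstCoord F = f₁ :=
  funext fun x ↦ by rw [firstCoord, hF]

theorem ProductForm.fst_apply {F : (ℝ × ℝ) ≃ₜ (ℝ × ℝ)} (hF : ProductForm F) (p : ℝ × ℝ) :
    (F p).1 = firstCoord F p.1 := by
  obtain ⟨f₁, f₂, hf⟩ := hF
  rw [firstCoord_eq hf, hf]

theorem ProductForm.firstCoord_mul {F : (ℝ × ℝ) ≃ₜ (ℝ × ℝ)} (hF : ProductForm F)
    (H : (ℝ × ℝ) ≃ₜ (ℝ × ℝ)) : firstCoord (F * H) = firstCoord F ∘ firstCoord H :=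
  funext fun x ↦ hF.fst_apply (H (x, 0))

abbrev firstCoordMulAction (G : Subgroup ((ℝ × ℝ) ≃ₜ (ℝ × ℝ))) (hprod : ∀ g ∈ G, ProductForm g) :
    MulAction G ℝ where
  smul g x := firstCoord g x
  one_smul _ := rfl
  mul_smul g h x := congrFun ((hprod g g.2).firstCoord_mul h) x

theorem AxiomA1.eq_of_isFixedPt_firstCoord {G : Subgroup ((ℝ × ℝ) ≃ₜ (ℝ × ℝ))} (hA1 : AxiomA1 G)
    {g : (ℝ × ℝ) ≃ₜ (ℝ × ℝ)} (hg : g ∈ G) (hg₁ : g ≠ 1) (hgF : ProductForm g) {a b : ℝ}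
    (ha : IsFixedPt (firstCoord g) a) (hb : IsFixedPt (firstCoord g) b) : a = b := by
  obtain ⟨f₁, f₂, hf⟩ := hgF
  rw [firstCoord_eq hf] at ha hb
  rcases hA1 g hg hg₁ f₁ f₂ hf (Or.inl ⟨a, ha⟩) with ⟨hcon, -⟩ | ⟨hexp, -⟩
  · exact hcon.eq_of_isFixedPt ha hb
  · exact hexp.eq_of_isFixedPt ha hb

/-- The subgroup of the stabilizer of the vertical line `{c} × ℝ` consisting of
elements whose two coordinate maps are both strictly increasing is abelian. -/
theorem leaf_stabilizer_orientation_preserving_abelian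
    (G : Subgroup ((ℝ × ℝ) ≃ₜ (ℝ × ℝ)))
    (hprod : ∀ g ∈ G, ProductForm g)
    (hA1 : AxiomA1 G)
    (c : ℝ) :
    ∀ g₁ ∈ G, ∀ g₂ ∈ G,
      ⇑g₁ '' {p : ℝ × ℝ | p.1 = c} = {p : ℝ × ℝ | p.1 = c} →
      ⇑g₂ '' {p : ℝ × ℝ | p.1 = c} = {p : ℝ × ℝ | p.1 = c} →
      (∃ f₁ f₂ : ℝ ≃ₜ ℝ, (∀ p : ℝ × ℝ, g₁ p = (f₁ p.1, f₂ p.2)) ∧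
        StrictMono (f₁ : ℝ → ℝ) ∧ StrictMono (f₂ : ℝ → ℝ)) →
      (∃ f₁ f₂ : ℝ ≃ₜ ℝ, (∀ p : ℝ × ℝ, g₂ p = (f₁ p.1, f₂ p.2)) ∧
        StrictMono (f₁ : ℝ → ℝ) ∧ StrictMono (f₂ : ℝ → ℝ)) →
      g₁ * g₂ = g₂ * g₁ := by
  intro g₁ hg₁ g₂ hg₂ hline₁ hline₂ hdec₁ hdec₂
  let _ := firstCoordMulAction G hprod
  let K := MulAction.strictMonoStabilizer G c
  have hK : ∀ g (hg : g ∈ G), ⇑g '' {p : ℝ × ℝ | p.1 = c} = {p : ℝ × ℝ | p.1 = c} →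
      (∃ f₁ f₂ : ℝ ≃ₜ ℝ, (∀ p : ℝ × ℝ, g p = (f₁ p.1, f₂ p.2)) ∧
        StrictMono (f₁ : ℝ → ℝ) ∧ StrictMono (f₂ : ℝ → ℝ)) → (⟨g, hg⟩ : G) ∈ K := by
    rintro g hg hline ⟨f₁, f₂, hf, hmono, -⟩
    refine ⟨show StrictMono (firstCoord g) by rwa [firstCoord_eq hf], ?_⟩
    exact hline.subset (Set.mem_image_of_mem g (show (c, 0).1 = c from rfl))
  have hfree : ∀ γ : K, ∀ x, c < x → γ • x = x → γ = 1 := fun γ x hx hγx ↦ by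
    by_contra hγ
    have hγ₁ : γ.1.1 ≠ 1 := fun h ↦ hγ (Subtype.ext (Subtype.ext h))
    exact hx.ne (hA1.eq_of_isFixedPt_firstCoord γ.1.2 hγ₁ (hprod _ γ.1.2) γ.2.2 hγx)
  have hcomm := MulAction.mul_comm_of_free_on_Ioi (fun γ : K ↦ γ.2.1) (fun γ : K ↦ γ.2.2) hfree
    ⟨⟨g₁, hg₁⟩, hK g₁ hg₁ hline₁ hdec₁⟩ ⟨⟨g₂, hg₂⟩, hK g₂ hg₂ hline₂ hdec₂⟩
  exact congrArg (fun γ : K ↦ γ.1.1) hcomm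
end
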